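/- In the Baumslag–Solitar automaton over A={0,1} with ψ(a)=(a,b), ψ(b)=(a,c)σ, ψ(c)=(b,c), identify A^ℕ with ℤ₂ via (aᵢ) ↦ Σaᵢ2ⁱ. Then a, b, c act on ℤ₂ as the affine maps X ↦ 3X, X ↦ 3X+1, X ↦ 3X+2 respectively, and in particular the group they generate is isomorphic to the set of maps X ↦ 3ⁿX + p with n ∈ ℤ, p ∈ ℤ[1/3], realized as transformations of ℤ₂. -/

import Mathlib

/-- The sequence of states of an automaton read along an infinite input word. -/
def stSeq {A Q : Type*} (τ : A → Q → Q) (q : Q) (x : ℕ → A) : ℕ → Q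
  | 0 => q
  | n + 1 => τ (x n) (stSeq τ q x n)

/-- The transformation of `A^ℕ` induced by an automaton at state `q`. -/
def actInf {A Q : Type*} (σ : A → Q → A) (τ : A → Q → Q) (q : Q) (x : ℕ → A) : ℕ → A :=
  fun n => σ (x n) (stSeq τ q x n)

/-- Output of the Baumslag–Solitar automaton (states `0 = a`, `1 = b`, `2 = c`):
`a` and `c` copy the digit, `b` flips it (`ψ(b)=(a,c)σ`). -/
def bsOut : Bool → Fin 3 → Bool := fun x q => if q = 1 then !x else x

/-- Transition of the Baumslag–Solitar automaton: `ψ(a)=(a,b)`, `ψ(b)=(a,c)σ`,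
`ψ(c)=(b,c)`. -/
def bsTrans : Bool → Fin 3 → Fin 3 := fun x q =>
  if q = 0 then (if x then 1 else 0)
  else if q = 1 then (if x then 2 else 0)
  else (if x then 2 else 1)

/-- The identification of `{0,1}^ℕ` with `ℤ₂`, `(aᵢ) ↦ Σ aᵢ 2ⁱ`. -/
noncomputable def toPadic (x : ℕ → Bool) : ℤ_[2] :=
  ∑' i : ℕ, (if x i then (1 : ℤ_[2]) else 0) * 2 ^ i

/-- The generators of the Baumslag–Solitar group as permutations of `{0,1}^ℕ`. -/
def bsGens : Set (Equiv.Perm (ℕ → Bool)) :=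
  {P | ∃ q : Fin 3, (P : (ℕ → Bool) → ℕ → Bool) = actInf bsOut bsTrans q}

/-- `p ∈ ℤ[1/3] ⊆ ℤ₂`. -/
def InZOneThird (p : ℤ_[2]) : Prop :=
  ∃ (i : ℤ) (j : ℕ), (3 : ℤ_[2]) ^ j * p = (i : ℤ_[2])

/-!
Reading a word from its least significant digit, the state of the automaton is the carry of the
computation of `3X + q`: for input digit `d`, output digit `o` and next state `q'` one has
`o + 2q' = 3d + q`. Hence the defect `toPadic (q x) - (3X + q)` is twice the defect at the tail of
`x`, so it lies in every power of the maximal ideal of `ℤ₂` and vanishes. The maps acting as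
`X ↦ 3^(m-k) X + p/3^k` with `p ∈ ℤ[1/3]` form a group containing `a, b, c`; conversely `a` and
`t = b a⁻¹ : X ↦ X + 1` produce all of them, and the action is faithful because binary expansion
is injective.
-/

open Function Equiv

theorem IsHausdorff.eq_zero_of_eq_mul_comp {R α : Type*} [CommRing R] {I : Ideal R}
    [IsHausdorff I R] {r : R} (hr : r ∈ I) {f : α → R} (T : α → α)
    (h : ∀ a, f a = r * f (T a)) (a : α) : f a = 0 := by
  have mem_pow : ∀ n a, f a ∈ I ^ n := by
    intro n
    induction n with
    | zero => simp
    | succ n ih => intro a; rw [h a, pow_succ']; exact Ideal.mul_mem_mul hr (ih _)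
  refine IsHausdorff.haus ‹_› (f a) fun n => ?_
  rw [SModEq.zero, smul_eq_mul, Ideal.mul_top]
  exact mem_pow n a

theorem PadicInt.norm_two_lt_one : ‖(2 : ℤ_[2])‖ < 1 := by
  rw [PadicInt.norm_lt_one_iff_dvd]
  exact_mod_cast dvd_refl _

section Automaton

variable {A Q : Type*}

theorem actInf_zero (σ : A → Q → A) (τ : A → Q → Q) (q : Q) (x : ℕ → A) :
    actInf σ τ q x 0 = σ (x 0) q := rfl

theorem stSeq_succ_eq_stSeq_tail (τ : A → Q → Q) (q : Q) (x : ℕ → A) (n : ℕ) :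
    stSeq τ q x (n + 1) = stSeq τ (τ (x 0) q) (fun k => x (k + 1)) n := by
  induction n with
  | zero => rfl
  | succ n ih => exact congrArg (τ (x (n + 1))) ih

theorem actInf_tail (σ : A → Q → A) (τ : A → Q → Q) (q : Q) (x : ℕ → A) :
    (fun n => actInf σ τ q x (n + 1)) = actInf σ τ (τ (x 0) q) fun n => x (n + 1) := by
  funext n
  exact congrArg (σ _) (stSeq_succ_eq_stSeq_tail τ q x n)

theorem actInf_leftInverse {σ σ' : A → Q → A} (τ : A → Q → Q)
    (h : ∀ q, LeftInverse (σ' · q) (σ · q)) (q : Q) :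
    LeftInverse (actInf σ' (fun d s => τ (σ' d s) s) q) (actInf σ τ q) := by
  intro x
  have stSeq_eq : ∀ n, stSeq (fun d s => τ (σ' d s) s) q (actInf σ τ q x) n = stSeq τ q x n := by
    intro n
    induction n with
    | zero => rfl
    | succ n ih => simp only [stSeq, actInf, ih, h _ _]
  funext n
  simp only [actInf, stSeq_eq, h _ _]

def actInfPerm (σ : A → Q → A) (hσ : ∀ q, Involutive (σ · q)) (τ : A → Q → Q) (q : Q) :
    Perm (ℕ → A) where
  toFun := actInf σ τ q
  invFun := actInf σ (fun d s => τ (σ d s) s) q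
  left_inv := actInf_leftInverse τ (fun q => (hσ q).leftInverse) q
  right_inv := by
    have h := actInf_leftInverse (fun d s => τ (σ d s) s) (fun q => (hσ q).leftInverse) q
    simp only [hσ _ _] at h
    exact h

end Automaton

theorem summable_toPadic (x : ℕ → Bool) :
    Summable fun i : ℕ => (if x i then (1 : ℤ_[2]) else 0) * 2 ^ i := by
  refine NonarchimedeanAddGroup.summable_of_tendsto_cofinite_zero ?_
  rw [Nat.cofinite_eq_atTop]
  refine squeeze_zero_norm (fun i => ?_)
    (tendsto_pow_atTop_nhds_zero_of_lt_one (norm_nonneg _) PadicInt.norm_two_lt_one)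
  rw [norm_mul, norm_pow]
  exact mul_le_of_le_one_left (by positivity) (PadicInt.norm_le_one _)

theorem toPadic_eq_toNat_add_two_mul (x : ℕ → Bool) :
    toPadic x = (x 0).toNat + 2 * toPadic fun n => x (n + 1) := by
  rw [toPadic, (summable_toPadic x).tsum_eq_zero_add, toPadic,
    ← (summable_toPadic _).tsum_mul_left]
  congr 1
  · cases x 0 <;> simp
  · congr 1; funext i; ring

theorem Bool.eq_and_eq_of_toNat_add_two_mul_eq {a b : Bool} {X Y : ℤ_[2]}
    (h : (a.toNat : ℤ_[2]) + 2 * X = b.toNat + 2 * Y) : a = b ∧ X = Y := by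
  have hab : a = b := by
    have h2 := congrArg (PadicInt.toZMod (p := 2)) h
    simp only [map_add, map_mul, map_natCast, map_ofNat, show (2 : ZMod 2) = 0 from rfl,
      zero_mul, add_zero] at h2
    cases a <;> cases b <;> simp_all
  subst hab
  exact ⟨rfl, mul_left_cancel₀ two_ne_zero (add_left_cancel h)⟩

theorem toPadic_injective : Injective toPadic := by
  have head_tail : ∀ {x y : ℕ → Bool}, toPadic x = toPadic y →
      x 0 = y 0 ∧ (toPadic fun n => x (n + 1)) = toPadic fun n => y (n + 1) := by
    intro x y h
    rw [toPadic_eq_toNat_add_two_mul x, toPadic_eq_toNat_add_two_mul y] at h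
    exact Bool.eq_and_eq_of_toNat_add_two_mul_eq h
  intro x y h
  funext n
  induction n generalizing x y with
  | zero => exact (head_tail h).1
  | succ n ih => exact ih (head_tail h).2

theorem bsOut_add_two_mul_bsTrans (d : Bool) (q : Fin 3) :
    (bsOut d q).toNat + 2 * (bsTrans d q : ℕ) = 3 * d.toNat + q := by
  revert d q
  decide

theorem bsOut_involutive (q : Fin 3) : Involutive (bsOut · q) := by
  intro d
  revert d q
  decide

theorem toPadic_actInf_bsOut_bsTrans (q : Fin 3) (x : ℕ → Bool) :
    toPadic (actInf bsOut bsTrans q x) = 3 * toPadic x + ((q : ℕ) : ℤ_[2]) := by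
  let defect : Fin 3 × (ℕ → Bool) → ℤ_[2] := fun qx =>
    toPadic (actInf bsOut bsTrans qx.1 qx.2) - (3 * toPadic qx.2 + ((qx.1 : ℕ) : ℤ_[2]))
  have defect_eq : ∀ qx, defect qx = 2 * defect (bsTrans (qx.2 0) qx.1, fun n => qx.2 (n + 1)) := by
    rintro ⟨q, x⟩
    have carry := congrArg (Nat.cast : ℕ → ℤ_[2]) (bsOut_add_two_mul_bsTrans (x 0) q)
    push_cast at carry
    simp only [defect]
    rw [toPadic_eq_toNat_add_two_mul (actInf bsOut bsTrans q x), actInf_zero, actInf_tail,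
      toPadic_eq_toNat_add_two_mul x]
    linear_combination carry
  have two_mem : (2 : ℤ_[2]) ∈ IsLocalRing.maximalIdeal ℤ_[2] :=
    (IsLocalRing.mem_maximalIdeal _).2 (PadicInt.mem_nonunits.2 PadicInt.norm_two_lt_one)
  exact sub_eq_zero.1 (IsHausdorff.eq_zero_of_eq_mul_comp two_mem _ defect_eq (q, x))

/-- `g` acts on `ℤ₂` as `X ↦ 3^(m-k) X + p/3^k`, with denominators cleared. -/
def ActsAffinely (g : Perm (ℕ → Bool)) (m k : ℕ) (p : ℤ_[2]) : Prop :=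
  ∀ x, 3 ^ k * toPadic (g x) = 3 ^ m * toPadic x + p

namespace ActsAffinely

variable {g h : Perm (ℕ → Bool)} {m k m' k' : ℕ} {p p' : ℤ_[2]}

theorem one : ActsAffinely 1 0 0 0 := fun x => by simp

theorem mul (hg : ActsAffinely g m k p) (hh : ActsAffinely h m' k' p') :
    ActsAffinely (g * h) (m + m') (k + k') (3 ^ m * p' + 3 ^ k' * p) := fun x => by
  simp only [Perm.mul_apply, pow_add]
  linear_combination 3 ^ k' * hg (h x) + 3 ^ m * hh x

theorem inv (hg : ActsAffinely g m k p) : ActsAffinely g⁻¹ k m (-p) := fun x => by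
  linear_combination -hg (g⁻¹ x) + congrArg (3 ^ k * toPadic ·) (g.apply_symm_apply x)

theorem of_three_mul (hg : ActsAffinely g (m + 1) (k + 1) (3 * p)) : ActsAffinely g m k p :=
  fun x => mul_left_cancel₀ (by norm_num : (3 : ℤ_[2]) ≠ 0) <| by
    linear_combination hg x

theorem pow (hg : ActsAffinely g m k 0) (n : ℕ) : ActsAffinely (g ^ n) (m * n) (k * n) 0 := by
  induction n with
  | zero => simpa using one
  | succ n ih => simpa [pow_succ, mul_add] using ih.mul hg

theorem zpow (hg : ActsAffinely g 0 0 p) (n : ℤ) : ActsAffinely (g ^ n) 0 0 (n * p) := by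
  induction n using Int.induction_on with
  | zero => simpa using one
  | succ n ih =>
    rw [zpow_add_one]
    convert ih.mul hg using 1
    push_cast
    ring
  | pred n ih =>
    rw [zpow_sub_one]
    convert ih.mul hg.inv using 1
    push_cast
    ring

end ActsAffinely

theorem inZOneThird_natCast (n : ℕ) : InZOneThird n := ⟨n, 0, by simp⟩

theorem InZOneThird.neg {p : ℤ_[2]} (hp : InZOneThird p) : InZOneThird (-p) := by
  obtain ⟨i, j, hij⟩ := hp
  exact ⟨-i, j, by push_cast; rw [← hij]; ring⟩

theorem InZOneThird.add {p p' : ℤ_[2]} (hp : InZOneThird p) (hp' : InZOneThird p') :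
    InZOneThird (p + p') := by
  obtain ⟨i, j, hij⟩ := hp
  obtain ⟨i', j', hij'⟩ := hp'
  exact ⟨3 ^ j' * i + 3 ^ j * i', j + j', by push_cast; rw [← hij, ← hij']; ring⟩

theorem InZOneThird.mul {p p' : ℤ_[2]} (hp : InZOneThird p) (hp' : InZOneThird p') :
    InZOneThird (p * p') := by
  obtain ⟨i, j, hij⟩ := hp
  obtain ⟨i', j', hij'⟩ := hp'
  exact ⟨i * i', j + j', by push_cast; rw [← hij, ← hij']; ring⟩

def affineSubgroup : Subgroup (Perm (ℕ → Bool)) where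
  carrier := {g | ∃ m k p, InZOneThird p ∧ ActsAffinely g m k p}
  one_mem' := ⟨0, 0, 0, by simpa using inZOneThird_natCast 0, .one⟩
  mul_mem' := by
    rintro g h ⟨m, k, p, hp, hg⟩ ⟨m', k', p', hp', hh⟩
    have three_pow (n : ℕ) : InZOneThird (3 ^ n) := by simpa using inZOneThird_natCast (3 ^ n)
    exact ⟨_, _, _, ((three_pow m).mul hp').add ((three_pow k').mul hp), hg.mul hh⟩
  inv_mem' := by
    rintro g ⟨m, k, p, hp, hg⟩
    exact ⟨k, m, -p, hp.neg, hg.inv⟩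

theorem closure_bsGens_le_affineSubgroup : Subgroup.closure bsGens ≤ affineSubgroup := by
  refine (Subgroup.closure_le _).2 fun g ⟨q, hq⟩ => ⟨1, 0, q, inZOneThird_natCast q, fun x => ?_⟩
  simpa [hq] using toPadic_actInf_bsOut_bsTrans q x

theorem actsAffinely_actInfPerm_bsOut_bsTrans (q : Fin 3) :
    ActsAffinely (actInfPerm bsOut bsOut_involutive bsTrans q) 1 0 q := fun x => by
  rw [pow_zero, one_mul, pow_one]
  exact toPadic_actInf_bsOut_bsTrans q x

theorem baumslag_solitar_affine_action :
    (∀ (q : Fin 3) (x : ℕ → Bool),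
        toPadic (actInf bsOut bsTrans q x) = 3 * toPadic x + ((q : ℕ) : ℤ_[2])) ∧
    (∀ g ∈ Subgroup.closure bsGens, ∃ (m k : ℕ) (p : ℤ_[2]), InZOneThird p ∧
        ∀ x : ℕ → Bool,
          (3 : ℤ_[2]) ^ k * toPadic ((g : Equiv.Perm (ℕ → Bool)) x)
            = (3 : ℤ_[2]) ^ m * toPadic x + p) ∧
    (∀ g ∈ Subgroup.closure bsGens, ∀ g' ∈ Subgroup.closure bsGens,
        (∀ x : ℕ → Bool, toPadic ((g : Equiv.Perm (ℕ → Bool)) x)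
            = toPadic ((g' : Equiv.Perm (ℕ → Bool)) x)) → g = g') ∧
    (∀ (m k j : ℕ) (i : ℤ), ∃ g ∈ Subgroup.closure bsGens,
        ∀ x : ℕ → Bool,
          (3 : ℤ_[2]) ^ (k + j) * toPadic ((g : Equiv.Perm (ℕ → Bool)) x)
            = (3 : ℤ_[2]) ^ (m + j) * toPadic x + (3 : ℤ_[2]) ^ k * (i : ℤ_[2])) := by
  refine ⟨toPadic_actInf_bsOut_bsTrans, fun g hg => closure_bsGens_le_affineSubgroup hg,
    fun g _ g' _ h => Equiv.ext fun x => toPadic_injective (h x), fun m k j i => ?_⟩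
  set a := actInfPerm bsOut bsOut_involutive bsTrans 0
  set t := actInfPerm bsOut bsOut_involutive bsTrans 1 * a⁻¹
  have ha : ActsAffinely a 1 0 0 := by simpa using actsAffinely_actInfPerm_bsOut_bsTrans 0
  have ht : ActsAffinely t 0 0 1 :=
    .of_three_mul (by simpa using (actsAffinely_actInfPerm_bsOut_bsTrans 1).mul ha.inv)
  have a_mem : a ∈ Subgroup.closure bsGens := Subgroup.subset_closure ⟨0, rfl⟩
  have t_mem : t ∈ Subgroup.closure bsGens :=
    mul_mem (Subgroup.subset_closure ⟨1, rfl⟩) (inv_mem a_mem)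
  refine ⟨(a ^ (k + j))⁻¹ * (t ^ (3 ^ k * i) * a ^ (m + j)),
    mul_mem (inv_mem (pow_mem a_mem _)) (mul_mem (zpow_mem t_mem _) (pow_mem a_mem _)),
    fun x => ?_⟩
  have hg := ((ha.pow (k + j)).inv.mul ((ht.zpow (3 ^ k * i)).mul (ha.pow (m + j)))) x
  simpa only [one_mul, zero_mul, mul_one, mul_zero, zero_add, add_zero, neg_zero, pow_zero,
    Int.cast_mul, Int.cast_pow, Int.cast_ofNat] using hg
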